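/- arXiv:1709.06268 — 3 statements merged into one kernel-verified Lean document; each statement's English description precedes it below -/
import Mathlib

section
/- Let 0 < λ ≤ 2. Then for every φ ∈ (0,π) and every t > 0, |f^{(λ)}(φ,t)| ≤ |λ−1| · (sin φ)^{λ−1} · ( |cot φ| + 2t/3 ) · e^t. -/
open Real

/-- `g(φ,t) = (cos(φ − it) − cos φ)/t` for `t ≠ 0`, with `g(φ,0) = i sin φ`. -/
noncomputable def gfun (φ t : ℝ) : ℂ :=
  if t = 0 then Complex.I * (Real.sin φ : ℂ)
  else (Complex.cos ((φ : ℂ) - Complex.I * (t : ℂ)) - Complex.cos (φ : ℂ)) / (t : ℂ)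

/-- `f^{(λ)}(φ,t) = (g(φ,t)^{λ−1} − g(φ,0)^{λ−1})/t`, complex powers with the
principal branch. -/
noncomputable def ffun (lam φ t : ℝ) : ℂ :=
  (gfun φ t ^ ((lam : ℂ) - 1) - gfun φ 0 ^ ((lam : ℂ) - 1)) / (t : ℂ)

/-!
Both `g(φ,0) = i sin φ` and `g(φ,t)`, whose imaginary part is `sin φ · sinh t / t ≥ sin φ`, lie in
the half-plane `Im z ≥ sin φ`. There the derivative `(λ-1) z^(λ-2)` of the principal power has
modulus at most `|λ-1| (sin φ)^(λ-2)`, because `λ ≤ 2`, so the mean value theorem bounds `|f|` by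
`|λ-1| (sin φ)^(λ-2) |g(φ,t) - g(φ,0)| / t`. The real and imaginary parts of `g(φ,t) - g(φ,0)`
are `cos φ (cosh t - 1)/t` and `sin φ (sinh t - t)/t`, and `cosh t - 1 ≤ t² eᵗ/2`,
`sinh t - t ≤ t³ eᵗ/2`.
-/

lemma cosh_sub_one_le_sq_mul_exp {t : ℝ} (ht : 0 ≤ t) : cosh t - 1 ≤ t ^ 2 / 2 * exp t := by
  have h_exp : exp t - 1 ≤ t * exp t := by
    have h := mul_le_mul_of_nonneg_right (one_sub_le_exp_neg t) (exp_pos t).le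
    rw [← exp_add, neg_add_cancel, exp_zero] at h
    linarith
  have h_exp_neg : 1 - exp (-t) ≤ t := by linarith [add_one_le_exp (-t)]
  have h_exp_neg_nonneg : 0 ≤ 1 - exp (-t) :=
    sub_nonneg.mpr (exp_le_one_iff.mpr (neg_nonpos.mpr ht))
  have h_factor : cosh t - 1 = (exp t - 1) * (1 - exp (-t)) / 2 := by
    rw [cosh_eq, exp_neg]
    field_simp
    ring
  rw [h_factor]
  nlinarith [mul_le_mul h_exp h_exp_neg h_exp_neg_nonneg (by positivity : 0 ≤ t * exp t)]

lemma sinh_sub_self_le_cube_mul_exp {t : ℝ} (ht : 0 ≤ t) : sinh t - t ≤ t ^ 3 / 2 * exp t := by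
  have h_deriv (x : ℝ) : HasDerivAt (fun x => sinh x - x) (cosh x - 1) x :=
    (hasDerivAt_sinh x).sub (hasDerivAt_id x)
  have h := (convex_Icc 0 t).image_sub_le_mul_sub_of_deriv_le
    (fun x _ => (h_deriv x).continuousAt.continuousWithinAt)
    (fun x _ => (h_deriv x).differentiableAt.differentiableWithinAt)
    (C := t ^ 2 / 2 * exp t) (fun x hx => ?_) 0 ⟨le_rfl, ht⟩ t ⟨ht, le_rfl⟩ ht
  · simp only [sinh_zero, sub_zero] at h
    linarith
  · rw [interior_Icc] at hx
    rw [(h_deriv x).deriv]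
    calc cosh x - 1 ≤ x ^ 2 / 2 * exp x := cosh_sub_one_le_sq_mul_exp hx.1.le
      _ ≤ t ^ 2 / 2 * exp t := by gcongr <;> linarith [hx.1, hx.2]

lemma norm_cpow_sub_cpow_le_of_le_im {μ m : ℝ} (hμ : μ ≤ 1) (hm : 0 < m) {v w : ℂ}
    (hv : m ≤ v.im) (hw : m ≤ w.im) :
    ‖w ^ (μ : ℂ) - v ^ (μ : ℂ)‖ ≤ |μ| * m ^ (μ - 1) * ‖w - v‖ := by
  refine (convex_halfSpace_im_ge m).norm_image_sub_le_of_norm_hasDerivWithin_le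
    (f := fun z : ℂ => z ^ (μ : ℂ)) (f' := fun z => μ * z ^ ((μ : ℂ) - 1))
    (fun z hz => ?_) (fun z hz => ?_) hv hw
  · have hz' : z ∈ Complex.slitPlane :=
      Complex.mem_slitPlane_iff.mpr (Or.inr (hm.trans_le hz).ne')
    exact (Complex.hasStrictDerivAt_cpow_const hz').hasDerivAt.hasDerivWithinAt
  · have hmz : m ≤ ‖z‖ := le_trans hz ((le_abs_self _).trans (Complex.abs_im_le_norm z))
    have hcast : (μ : ℂ) - 1 = ((μ - 1 : ℝ) : ℂ) := by push_cast; ring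
    rw [norm_mul, Complex.norm_real, norm_eq_abs, hcast, Complex.norm_cpow_real]
    exact mul_le_mul_of_nonneg_left (rpow_le_rpow_of_nonpos hm hmz (by linarith))
      (abs_nonneg μ)

lemma gfun_of_ne_zero (φ : ℝ) {t : ℝ} (ht : t ≠ 0) :
    gfun φ t =
      ((cos φ * (cosh t - 1) / t : ℝ) : ℂ) + ((sin φ * sinh t / t : ℝ) : ℂ) * Complex.I := by
  have h_cos :
      Complex.cos (φ - Complex.I * t) = cos φ * cosh t + sin φ * sinh t * Complex.I := by
    rw [mul_comm Complex.I, Complex.cos_sub, Complex.cos_mul_I, Complex.sin_mul_I,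
      ← Complex.ofReal_cos, ← Complex.ofReal_sin, ← Complex.ofReal_cosh, ← Complex.ofReal_sinh]
    ring
  rw [gfun, if_neg ht, h_cos, ← Complex.ofReal_cos]
  have ht' : (t : ℂ) ≠ 0 := Complex.ofReal_ne_zero.mpr ht
  push_cast
  field_simp
  ring

lemma gfun_zero (φ : ℝ) : gfun φ 0 = (sin φ : ℂ) * Complex.I := by
  rw [gfun, if_pos rfl, mul_comm]

lemma re_gfun_sub_gfun_zero (φ : ℝ) {t : ℝ} (ht : t ≠ 0) :
    (gfun φ t - gfun φ 0).re = cos φ * (cosh t - 1) / t := by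
  simp only [gfun_of_ne_zero φ ht, gfun_zero, Complex.sub_re, Complex.add_re, Complex.mul_I_re,
    Complex.ofReal_re, Complex.ofReal_im, neg_zero, add_zero, sub_zero]

lemma im_gfun_zero (φ : ℝ) : (gfun φ 0).im = sin φ := by
  rw [gfun_zero, Complex.mul_I_im, Complex.ofReal_re]

lemma im_gfun_of_ne_zero (φ : ℝ) {t : ℝ} (ht : t ≠ 0) :
    (gfun φ t).im = sin φ * sinh t / t := by
  simp only [gfun_of_ne_zero φ ht, Complex.add_im, Complex.mul_I_im, Complex.ofReal_re,
    Complex.ofReal_im, zero_add]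

lemma sin_le_im_gfun {φ t : ℝ} (hφ : 0 ≤ sin φ) (ht : 0 < t) : sin φ ≤ (gfun φ t).im := by
  rw [im_gfun_of_ne_zero φ ht.ne', le_div_iff₀ ht]
  exact mul_le_mul_of_nonneg_left (self_le_sinh_iff.mpr ht.le) hφ

lemma norm_gfun_sub_gfun_zero_le {φ t : ℝ} (hφ : 0 ≤ sin φ) (ht : 0 < t) :
    ‖gfun φ t - gfun φ 0‖ ≤ t * (|cos φ| + sin φ * t) / 2 * exp t := by
  have h_re : |(gfun φ t - gfun φ 0).re| = |cos φ| * (cosh t - 1) / t := by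
    rw [re_gfun_sub_gfun_zero φ ht.ne', abs_div, abs_mul, abs_of_pos ht,
      abs_of_nonneg (sub_nonneg.mpr (one_le_cosh t))]
  have h_im : (gfun φ t - gfun φ 0).im = sin φ * (sinh t - t) / t := by
    rw [Complex.sub_im, im_gfun_of_ne_zero φ ht.ne', im_gfun_zero]
    field_simp
  have h_cosh :=
    mul_le_mul_of_nonneg_left (cosh_sub_one_le_sq_mul_exp ht.le) (abs_nonneg (cos φ))
  have h_sinh := mul_le_mul_of_nonneg_left (sinh_sub_self_le_cube_mul_exp ht.le) hφ
  have h_sinh_nonneg : 0 ≤ sinh t - t := sub_nonneg.mpr (self_le_sinh_iff.mpr ht.le)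
  calc ‖gfun φ t - gfun φ 0‖
      ≤ |(gfun φ t - gfun φ 0).re| + |(gfun φ t - gfun φ 0).im| :=
        Complex.norm_le_abs_re_add_abs_im _
    _ = (|cos φ| * (cosh t - 1) + sin φ * (sinh t - t)) / t := by
      rw [h_re, h_im, abs_of_nonneg (div_nonneg (mul_nonneg hφ h_sinh_nonneg) ht.le), add_div]
    _ ≤ t * (|cos φ| + sin φ * t) / 2 * exp t := by
      rw [div_le_iff₀ ht]
      nlinarith

theorem ffun_bound_small_lambda_general (lam : ℝ) (hlam2 : lam ≤ 2)
    (φ t : ℝ) (hφ : φ ∈ Set.Ioo 0 π) (ht : 0 < t) :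
    ‖ffun lam φ t‖ ≤
      |lam - 1| * Real.sin φ ^ (lam - 1) *
        (|Real.cos φ / Real.sin φ| + 2 * t / 3) * Real.exp t := by
  set s := sin φ
  have hs : 0 < s := sin_pos_of_pos_of_lt_pi hφ.1 hφ.2
  have h_pow := norm_cpow_sub_cpow_le_of_le_im (μ := lam - 1) (by linarith) hs
    (im_gfun_zero φ).ge (sin_le_im_gfun hs.le ht)
  have h_cast : (lam : ℂ) - 1 = ((lam - 1 : ℝ) : ℂ) := by push_cast; ring
  have h_cot : (|cos φ| + s * t) / 2 ≤ s * (|cos φ| / s + 2 * t / 3) := by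
    rw [mul_add, mul_div_cancel₀ _ hs.ne']
    nlinarith [abs_nonneg (cos φ)]
  calc ‖ffun lam φ t‖
      = ‖gfun φ t ^ ((lam - 1 : ℝ) : ℂ) - gfun φ 0 ^ ((lam - 1 : ℝ) : ℂ)‖ / t := by
        rw [ffun, norm_div, Complex.norm_real, norm_eq_abs, abs_of_pos ht, h_cast]
    _ ≤ |lam - 1| * s ^ (lam - 1 - 1) * (t * (|cos φ| + s * t) / 2 * exp t) / t := by
        gcongr
        exact h_pow.trans (by gcongr; exact norm_gfun_sub_gfun_zero_le hs.le ht)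
    _ = |lam - 1| * s ^ (lam - 1 - 1) * ((|cos φ| + s * t) / 2) * exp t := by
        field_simp
    _ ≤ |lam - 1| * s ^ (lam - 1 - 1) * (s * (|cos φ| / s + 2 * t / 3)) * exp t := by
        gcongr
    _ = |lam - 1| * s ^ (lam - 1) * (|cos φ / s| + 2 * t / 3) * exp t := by
        have h_rpow := rpow_add_one hs.ne' (lam - 1 - 1)
        rw [sub_add_cancel] at h_rpow
        rw [abs_div, abs_of_pos hs, h_rpow]
        ring

theorem ffun_bound_small_lambda (lam : ℝ) (hlam0 : 0 < lam) (hlam2 : lam ≤ 2)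
    (φ t : ℝ) (hφ : φ ∈ Set.Ioo 0 π) (ht : 0 < t) :
    ‖ffun lam φ t‖ ≤
      |lam - 1| * Real.sin φ ^ (lam - 1) *
        (|Real.cos φ / Real.sin φ| + 2 * t / 3) * Real.exp t :=
  ffun_bound_small_lambda_general lam hlam2 φ t hφ ht
end

section
/- Let λ > −1/2 be real and let ν ≥ 1 be real. Then for every x ∈ (−1,1], (ν+2λ) · ʳG_{ν+1}^{(λ)}(x) = 2(ν+λ) · x · ʳG_ν^{(λ)}(x) − ν · ʳG_{ν−1}^{(λ)}(x). -/
open Real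

/-- Pochhammer symbol `(a)_n = a (a+1) ⋯ (a+n-1)` for a real base. -/
noncomputable def poch (a : ℝ) (n : ℕ) : ℝ := ∏ i ∈ Finset.range n, (a + (i : ℝ))

/-- The right generalized Gegenbauer function of fractional degree. -/
noncomputable def rG (lam nu x : ℝ) : ℝ :=
  ∑' j : ℕ, (poch (-nu) j * poch (nu + 2 * lam) j /
    ((j.factorial : ℝ) * poch (lam + 1 / 2) j)) * ((1 - x) / 2) ^ j

/-! With `t = (1 - x) / 2`, `rG lam μ x` is the power series `∑ c_μ(j) tʲ`, convergent for
`|t| < 1` by the ratio test since `c_μ(j + 1) / c_μ(j) → 1`. The Pochhammer contiguity relations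
write `c_{ν+1}(j + 1)`, `c_ν(j + 1)` and `c_{ν-1}(j + 1)` as rational multiples of `c_ν(j)`, and a
polynomial identity in `j` gives
`(ν + 2λ) c_{ν+1}(j + 1) - 2(ν + λ) c_ν(j + 1) + ν c_{ν-1}(j + 1) = -4(ν + λ) c_ν(j)`.
The same combination vanishes at `j = 0`, so its series equals `-4(ν + λ) t ∑ c_ν(j) tʲ`, which is
the recurrence once `x = 1 - 2t`. -/

open Filter Topology

lemma poch_zero (a : ℝ) : poch a 0 = 1 := Finset.prod_range_zero _

lemma poch_succ_right (a : ℝ) (n : ℕ) : poch a (n + 1) = poch a n * (a + n) :=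
  Finset.prod_range_succ _ _

lemma poch_succ_left (a : ℝ) (n : ℕ) : poch a (n + 1) = a * poch (a + 1) n := by
  rw [poch, Finset.prod_range_succ', mul_comm, Nat.cast_zero, add_zero]
  congr 1
  refine Finset.prod_congr rfl fun i _ => ?_
  push_cast
  ring

lemma mul_poch_add_one_succ (a : ℝ) (n : ℕ) :
    a * poch (a + 1) (n + 1) = poch a n * (a + n) * (a + n + 1) := by
  rw [← poch_succ_left, poch_succ_right, poch_succ_right]
  push_cast
  ring

noncomputable def ggfCoeff (lam mu : ℝ) (j : ℕ) : ℝ :=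
  poch (-mu) j * poch (mu + 2 * lam) j / ((j.factorial : ℝ) * poch (lam + 1 / 2) j)

noncomputable def ggfSeries (lam mu t : ℝ) : ℝ :=
  ∑' j : ℕ, ggfCoeff lam mu j * t ^ j

lemma rG_eq_ggfSeries (lam mu x : ℝ) : rG lam mu x = ggfSeries lam mu ((1 - x) / 2) := rfl

lemma ggfCoeff_zero (lam mu : ℝ) : ggfCoeff lam mu 0 = 1 := by
  simp [ggfCoeff, poch_zero]

noncomputable def ggfRatio (lam mu : ℝ) (j : ℕ) : ℝ :=
  (j - mu) * (j + mu + 2 * lam) / ((j + 1) * (j + lam + 1 / 2))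

-- Once `mul_inv` splits the inverted denominators, `ring` checks this identity and the two
-- below literally, the junk value `x / 0 = 0` included.
lemma ggfCoeff_succ (lam mu : ℝ) (j : ℕ) :
    ggfCoeff lam mu (j + 1) = ggfCoeff lam mu j * ggfRatio lam mu j := by
  rw [ggfCoeff, ggfCoeff, ggfRatio, poch_succ_right, poch_succ_right, poch_succ_right,
    Nat.factorial_succ]
  push_cast
  simp only [div_eq_mul_inv, mul_inv]
  ring

lemma tendsto_ggfRatio (lam mu : ℝ) : Tendsto (ggfRatio lam mu) atTop (𝓝 1) := by
  have h := (tendsto_add_mul_div_add_mul_atTop_nhds (-mu) 1 1 one_ne_zero).mul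
    (tendsto_add_mul_div_add_mul_atTop_nhds (mu + 2 * lam) (lam + 1 / 2) 1 one_ne_zero)
  rw [div_one, one_mul] at h
  refine h.congr fun j => ?_
  rw [ggfRatio, div_mul_div_comm]
  ring_nf

lemma summable_ggfCoeff_mul_pow (lam mu : ℝ) {t : ℝ} (ht : |t| < 1) :
    Summable fun j => ggfCoeff lam mu j * t ^ j := by
  obtain ⟨r, htr, hr1⟩ := exists_between ht
  have hlim : Tendsto (fun j => |ggfRatio lam mu j| * |t|) atTop (𝓝 |t|) := by
    simpa using ((tendsto_ggfRatio lam mu).abs).mul_const |t|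
  refine summable_of_ratio_norm_eventually_le hr1 ?_
  filter_upwards [hlim.eventually_lt_const htr] with j hj
  calc ‖ggfCoeff lam mu (j + 1) * t ^ (j + 1)‖
      = ‖ggfCoeff lam mu j * t ^ j‖ * (|ggfRatio lam mu j| * |t|) := by
        rw [ggfCoeff_succ, pow_succ, Real.norm_eq_abs, Real.norm_eq_abs, abs_mul, abs_mul,
          abs_mul, abs_mul]
        ring
    _ ≤ r * ‖ggfCoeff lam mu j * t ^ j‖ := by
        rw [mul_comm r]
        exact mul_le_mul_of_nonneg_left hj.le (norm_nonneg _)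

lemma ggfCoeff_add_one_succ (lam mu : ℝ) (m : ℕ) :
    (mu + 2 * lam) * ggfCoeff lam (mu + 1) (m + 1) = ggfCoeff lam mu m *
      (-(mu + 1) * (m + mu + 2 * lam) * (m + mu + 2 * lam + 1) / ((m + 1) * (m + lam + 1 / 2))) := by
  have hQ := mul_poch_add_one_succ (mu + 2 * lam) m
  rw [ggfCoeff, ggfCoeff, poch_succ_left, poch_succ_right (lam + 1 / 2), Nat.factorial_succ,
    show -(mu + 1) + 1 = -mu by ring, show mu + 1 + 2 * lam = mu + 2 * lam + 1 by ring]
  push_cast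
  -- keeps `div_eq_mul_inv` away from the argument `lam + 1 / 2`
  generalize poch (lam + 1 / 2) m = R
  simp only [div_eq_mul_inv, mul_inv]
  linear_combination (-(mu + 1) * poch (-mu) m * ((m : ℝ) + 1)⁻¹ * (m.factorial : ℝ)⁻¹ *
    R⁻¹ * (lam + 2⁻¹ + m)⁻¹) * hQ

lemma ggfCoeff_sub_one_succ (lam mu : ℝ) (m : ℕ) :
    mu * ggfCoeff lam (mu - 1) (m + 1) = ggfCoeff lam mu m *
      (-(mu + 2 * lam - 1) * (m - mu) * (m - mu + 1) / ((m + 1) * (m + lam + 1 / 2))) := by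
  have hP := mul_poch_add_one_succ (-mu) m
  rw [ggfCoeff, ggfCoeff, poch_succ_left (mu - 1 + 2 * lam), poch_succ_right (lam + 1 / 2),
    Nat.factorial_succ, show -(mu - 1) = -mu + 1 by ring,
    show mu - 1 + 2 * lam + 1 = mu + 2 * lam by ring]
  push_cast
  generalize poch (lam + 1 / 2) m = R
  simp only [div_eq_mul_inv, mul_inv]
  linear_combination (-(mu + 2 * lam - 1) * poch (mu + 2 * lam) m * ((m : ℝ) + 1)⁻¹ *
    (m.factorial : ℝ)⁻¹ * R⁻¹ * (lam + 2⁻¹ + m)⁻¹) * hP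

lemma ggfCoeff_contiguous (lam mu : ℝ) {m : ℕ} (hm : (m : ℝ) + lam + 1 / 2 ≠ 0) :
    (mu + 2 * lam) * ggfCoeff lam (mu + 1) (m + 1) - 2 * (mu + lam) * ggfCoeff lam mu (m + 1)
      + mu * ggfCoeff lam (mu - 1) (m + 1) = -(4 * (mu + lam)) * ggfCoeff lam mu m := by
  have hD : ((m : ℝ) + 1) * (m + lam + 1 / 2) ≠ 0 := mul_ne_zero (by positivity) hm
  rw [ggfCoeff_add_one_succ, ggfCoeff_sub_one_succ, ggfCoeff_succ, ggfRatio]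
  calc _ = ggfCoeff lam mu m * ((-(mu + 1) * (m + mu + 2 * lam) * (m + mu + 2 * lam + 1)
          - 2 * (mu + lam) * ((m - mu) * (m + mu + 2 * lam))
          - (mu + 2 * lam - 1) * (m - mu) * (m - mu + 1)) / ((m + 1) * (m + lam + 1 / 2))) := by
        ring
    _ = ggfCoeff lam mu m * -(4 * (mu + lam)) := by
        congr 1
        rw [div_eq_iff hD]
        ring
    _ = _ := mul_comm _ _

lemma ggfSeries_contiguous (lam mu t : ℝ) (hlam : ∀ m : ℕ, (m : ℝ) + lam + 1 / 2 ≠ 0)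
    (ht : |t| < 1) :
    (mu + 2 * lam) * ggfSeries lam (mu + 1) t - 2 * (mu + lam) * ggfSeries lam mu t
      + mu * ggfSeries lam (mu - 1) t = -(4 * (mu + lam)) * t * ggfSeries lam mu t := by
  have hS (nu : ℝ) : HasSum (fun j => ggfCoeff lam nu j * t ^ j) (ggfSeries lam nu t) :=
    (summable_ggfCoeff_mul_pow lam nu ht).hasSum
  set g : ℕ → ℝ := fun j => ((mu + 2 * lam) * ggfCoeff lam (mu + 1) j
    - 2 * (mu + lam) * ggfCoeff lam mu j + mu * ggfCoeff lam (mu - 1) j) * t ^ j with hg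
  have hg_sum : HasSum g ((mu + 2 * lam) * ggfSeries lam (mu + 1) t
      - 2 * (mu + lam) * ggfSeries lam mu t + mu * ggfSeries lam (mu - 1) t) :=
    (((hS _).mul_left _).sub ((hS mu).mul_left _)).add ((hS _).mul_left mu) |>.congr_fun
      fun j => by rw [hg]; ring
  have hg_zero : g 0 = 0 := by
    rw [hg]
    simp only [ggfCoeff_zero, pow_zero]
    ring
  have hg_succ : HasSum (fun j => g (j + 1)) (-(4 * (mu + lam)) * t * ggfSeries lam mu t) :=
    (hS mu).mul_left _ |>.congr_fun fun j => by
      simp only [hg]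
      rw [pow_succ, ggfCoeff_contiguous lam mu (hlam j)]
      ring
  refine hg_sum.unique ((hasSum_nat_add_iff' 1).mp ?_)
  simpa [hg_zero] using hg_succ

theorem ggf_three_term_recurrence_general (lam nu : ℝ) (hlam : -(1 / 2) < lam)
    (x : ℝ) (hx : x ∈ Set.Ioc (-1 : ℝ) 1) :
    (nu + 2 * lam) * rG lam (nu + 1) x =
      2 * (nu + lam) * x * rG lam nu x - nu * rG lam (nu - 1) x := by
  obtain ⟨hx₁, hx₂⟩ := hx
  have ht : |(1 - x) / 2| < 1 := abs_lt.mpr ⟨by linarith, by linarith⟩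
  have hden (m : ℕ) : (m : ℝ) + lam + 1 / 2 ≠ 0 := by
    have := m.cast_nonneg (α := ℝ)
    linarith
  have hseries := ggfSeries_contiguous lam nu _ hden ht
  rw [rG_eq_ggfSeries, rG_eq_ggfSeries, rG_eq_ggfSeries]
  linear_combination hseries

/-- Three-term recurrence for the GGF-Fs. -/
theorem ggf_three_term_recurrence (lam nu : ℝ) (hlam : -(1 / 2) < lam) (hnu : 1 ≤ nu)
    (x : ℝ) (hx : x ∈ Set.Ioc (-1 : ℝ) 1) :
    (nu + 2 * lam) * rG lam (nu + 1) x =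
      2 * (nu + lam) * x * rG lam nu x - nu * rG lam (nu - 1) x :=
  ggf_three_term_recurrence_general lam nu hlam x hx
end

section
/- Let λ > −1/2 be real and let ν ≥ 0 be real. Then the function u(x) = ʳG_ν^{(λ)}(x) is twice differentiable on (−1,1) and satisfies the Sturm–Liouville differential equation (1−x²) u''(x) − (2λ+1) x u'(x) + ν(ν+2λ) u(x) = 0 for every x ∈ (−1,1). -/
open Real

/-!
Substituting `t = (1 - x) / 2`, the series defining `rG λ ν` is Gauss's hypergeometric series
`₂F₁(-ν, ν + 2λ; λ + 1/2; t)`, and the Sturm–Liouville equation becomes the hypergeometric equation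
`t (1 - t) F'' + (c - (a + b + 1) t) F' - a b F = 0`. Since `c = λ + 1/2` is not a nonpositive
integer, the series has radius of convergence at least `1`, so it can be differentiated termwise on
`(-1, 1)`, and the equation reduces to the coefficient recurrence
`(n + 1) (n + c) Aₙ₊₁ = (n + a) (n + b) Aₙ`.
-/

open Topology FormalMultilinearSeries
open scoped NNReal

section PowerSeries

variable {a : ℕ → ℝ}

theorem summable_pow_mul_abs_mul_pow_of_lt_radius {s : ℝ} (hs : 0 ≤ s)
    (h : ENNReal.ofReal s < (ofScalars ℝ a).radius) (k : ℕ) :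
    Summable fun n : ℕ => (n : ℝ) ^ k * |a n| * s ^ n := by
  lift s to ℝ≥0 using hs
  obtain ⟨q, hq, C, -, hC⟩ :=
    (ofScalars ℝ a).norm_mul_pow_le_mul_pow_of_lt_radius (by simpa using h)
  refine .of_nonneg_of_le (fun n => by positivity) (fun n => ?_)
    ((summable_pow_mul_geometric_of_norm_lt_one k (r := q)
      (by rw [Real.norm_eq_abs, abs_of_pos hq.1]; exact hq.2)).mul_left C)
  have hn := hC n
  rw [ofScalars_norm, Real.norm_eq_abs] at hn
  calc (n : ℝ) ^ k * |a n| * s ^ n = (n : ℝ) ^ k * (|a n| * s ^ n) := by ring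
    _ ≤ (n : ℝ) ^ k * (C * q ^ n) := by gcongr
    _ = C * ((n : ℝ) ^ k * q ^ n) := by ring

theorem norm_mul_natSub_mul_pow_le {s y : ℝ} (hs : 0 < s) (hy : |y| ≤ s) (m n : ℕ) :
    ‖a n * ((n - m : ℕ) : ℝ) * y ^ (n - (m + 1))‖ ≤ n * |a n| * s ^ n / s ^ (m + 1) := by
  rcases le_or_gt n m with hnm | hmn
  · rw [Nat.sub_eq_zero_of_le hnm]
    simp only [Nat.cast_zero, mul_zero, zero_mul, norm_zero]
    positivity
  · obtain ⟨k, rfl⟩ := Nat.exists_eq_add_of_lt hmn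
    have hk : m + k + 1 - (m + 1) = k := by omega
    have hk' : m + k + 1 - m = k + 1 := by omega
    rw [hk, hk', Real.norm_eq_abs, abs_mul, abs_mul, abs_pow, Nat.abs_cast,
      show s ^ (m + k + 1) = s ^ k * s ^ (m + 1) by ring, mul_div_assoc,
      mul_div_cancel_right₀ _ (pow_ne_zero _ hs.ne')]
    push_cast
    calc |a (m + k + 1)| * (k + 1) * |y| ^ k
        ≤ |a (m + k + 1)| * (m + k + 1) * s ^ k := by
          gcongr
          · linarith [(m.cast_nonneg : (0 : ℝ) ≤ m)]
      _ = (m + k + 1) * |a (m + k + 1)| * s ^ k := by ring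

theorem hasDerivAt_tsum_mul_pow_sub (m : ℕ) {s t : ℝ} (hts : |t| < s)
    (hs : Summable fun n : ℕ => (n : ℝ) * |a n| * s ^ n) :
    HasDerivAt (fun y => ∑' n, a n * y ^ (n - m))
      (∑' n, a n * ((n - m : ℕ) : ℝ) * t ^ (n - (m + 1))) t := by
  have hs0 : 0 < s := (abs_nonneg t).trans_lt hts
  refine hasDerivAt_tsum_of_isPreconnected
    (g' := fun n y => a n * ((n - m : ℕ) : ℝ) * y ^ (n - (m + 1)))
    (hs.div_const (s ^ (m + 1))) Metric.isOpen_ball (convex_ball (0 : ℝ) s).isPreconnected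
    (fun n y _ => ?_) (fun n y hy => norm_mul_natSub_mul_pow_le hs0 ?_ m n)
    (Metric.mem_ball_self hs0) ?_ (by simpa using hts)
  · rw [mul_assoc, ← Nat.sub_sub]
    exact (hasDerivAt_pow (n - m) y).const_mul (a n)
  · simpa using (mem_ball_zero_iff.mp hy).le
  · refine summable_of_ne_finset_zero (s := Finset.range (m + 1)) fun n hn => ?_
    rw [Finset.mem_range, not_lt] at hn
    simp [zero_pow (by omega : n - m ≠ 0)]

theorem summable_mul_natSub_mul_pow (m : ℕ) {s t : ℝ} (hs0 : 0 < s) (hts : |t| ≤ s)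
    (hs : Summable fun n : ℕ => (n : ℝ) * |a n| * s ^ n) :
    Summable fun n => a n * ((n - m : ℕ) : ℝ) * t ^ (n - (m + 1)) :=
  .of_norm_bounded (hs.div_const _) (norm_mul_natSub_mul_pow_le hs0 hts m)

end PowerSeries

section Hypergeometric

variable {a b c : ℝ}

theorem one_le_radius_ordinaryHypergeometricSeries (hc : ∀ k : ℕ, c ≠ -k) :
    1 ≤ (ordinaryHypergeometricSeries ℝ a b c).radius := by
  by_cases hab : ∃ k : ℕ, a = -k ∨ b = -k
  · obtain ⟨k, rfl | rfl⟩ := hab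
    · simp [ordinaryHypergeometric_radius_top_of_neg_nat₁]
    · simp [ordinaryHypergeometric_radius_top_of_neg_nat₂]
  · push Not at hab
    refine (ordinaryHypergeometricSeries_radius_eq_one ℝ a b c fun k => ?_).ge
    refine ⟨fun h => (hab k).1 ?_, fun h => (hab k).2 ?_, fun h => hc k ?_⟩ <;> linarith

theorem ordinaryHypergeometricCoefficient_succ (hc : ∀ k : ℕ, c ≠ -k) (n : ℕ) :
    (n + 1) * (n + c) * ordinaryHypergeometricCoefficient a b c (n + 1) =
      (n + a) * (n + b) * ordinaryHypergeometricCoefficient a b c n := by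
  have hpoch : (ascPochhammer ℝ n).eval c ≠ 0 := by
    rw [ne_eq, ascPochhammer_eval_eq_zero_iff]
    rintro ⟨k, -, hk⟩
    exact hc k (by linarith)
  have hcn : c + n ≠ 0 := fun h => hc n (by linarith)
  simp only [ordinaryHypergeometricCoefficient, ascPochhammer_succ_eval, Nat.factorial_succ,
    Nat.cast_mul, Nat.cast_succ]
  field_simp
  ring

theorem ordinaryHypergeometric_eq_tsum_mul_pow (t : ℝ) :
    ₂F₁ a b c t = ∑' n, ordinaryHypergeometricCoefficient a b c n * t ^ n :=
  ordinaryHypergeometric_sum_eq a b c t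

theorem exists_summable_pow_mul_abs_ordinaryHypergeometricCoefficient_mul_pow
    (hc : ∀ k : ℕ, c ≠ -k) {t : ℝ} (ht : |t| < 1) : ∃ s, |t| < s ∧ ∀ k : ℕ,
      Summable fun n : ℕ => (n : ℝ) ^ k * |ordinaryHypergeometricCoefficient a b c n| * s ^ n := by
  obtain ⟨s, hts, hs1⟩ := exists_between ht
  refine ⟨s, hts, summable_pow_mul_abs_mul_pow_of_lt_radius ((abs_nonneg t).trans hts.le) ?_⟩
  exact lt_of_lt_of_le (by simpa using hs1) (one_le_radius_ordinaryHypergeometricSeries hc)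

theorem hypergeometric_ode_tsum_of_recurrence {A : ℕ → ℝ}
    (hrec : ∀ n : ℕ, (n + 1) * (n + c) * A (n + 1) = (n + a) * (n + b) * A n)
    {s t : ℝ} (hts : |t| < s) (hs : ∀ k, Summable fun n : ℕ => (n : ℝ) ^ k * |A n| * s ^ n) :
    t * (1 - t) * ∑' n, A n * n * ((n - 1 : ℕ) : ℝ) * t ^ (n - 2) +
        (c - (a + b + 1) * t) * ∑' n, A n * n * t ^ (n - 1) - a * b * ∑' n, A n * t ^ n = 0 := by
  set F : ℕ → ℝ := fun n => A n * t ^ n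
  set G : ℕ → ℝ := fun n => A n * n * t ^ (n - 1)
  set H : ℕ → ℝ := fun n => A n * n * ((n - 1 : ℕ) : ℝ) * t ^ (n - 2)
  have hs0 : 0 < s := (abs_nonneg t).trans_lt hts
  have hF : Summable F := .of_norm_bounded (by simpa using hs 0) fun n => by
    simp only [F, norm_mul, norm_pow, Real.norm_eq_abs]
    gcongr
  have hG : Summable G := by
    simpa using summable_mul_natSub_mul_pow 0 hs0 hts.le (by simpa using hs 1)
  have hH : Summable H := by
    simpa using summable_mul_natSub_mul_pow (a := fun n => A n * n) 1 hs0 hts.le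
      (by simpa [abs_mul, pow_two, mul_assoc, mul_comm, mul_left_comm] using hs 2)
  -- `t F'' + c F'` and `t² F'' + (a + b + 1) t F' + a b F` have `n`-th terms
  -- `n (n - 1 + c) Aₙ tⁿ⁻¹` and `(n + a) (n + b) Aₙ tⁿ`,
  -- which the recurrence matches after a shift of the index.
  have hterm (n : ℕ) :
      t * H (n + 1) + c * G (n + 1) = t ^ 2 * H n + (a + b + 1) * t * G n + a * b * F n := by
    rcases n with _ | _ | n
    · simp [F, G, H]
      linear_combination hrec 0
    · simp [F, G, H]
      linear_combination t * hrec 1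
    · have hrec' := hrec (n + 1 + 1)
      simp [F, G, H]
      push_cast at hrec' ⊢
      linear_combination t ^ (n + 2) * hrec'
  have hshift : ∑' n, (t * H n + c * G n) =
      ∑' n, (t ^ 2 * H n + (a + b + 1) * t * G n + a * b * F n) := by
    rw [((hH.mul_left t).add (hG.mul_left c)).tsum_eq_zero_add, tsum_congr hterm]
    simp [G, H]
  have hlhs : ∑' n, (t * H n + c * G n) = t * ∑' n, H n + c * ∑' n, G n := by
    rw [(hH.mul_left t).tsum_add (hG.mul_left c), tsum_mul_left, tsum_mul_left]
  have hrhs : ∑' n, (t ^ 2 * H n + (a + b + 1) * t * G n + a * b * F n) =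
      t ^ 2 * ∑' n, H n + (a + b + 1) * t * ∑' n, G n + a * b * ∑' n, F n := by
    rw [((hH.mul_left _).add (hG.mul_left _)).tsum_add (hF.mul_left _),
      (hH.mul_left _).tsum_add (hG.mul_left _), tsum_mul_left, tsum_mul_left, tsum_mul_left]
  linear_combination hshift - hlhs + hrhs

theorem hasDerivAt_ordinaryHypergeometric (hc : ∀ k : ℕ, c ≠ -k) {t : ℝ} (ht : |t| < 1) :
    HasDerivAt (₂F₁ a b c)
      (∑' n, ordinaryHypergeometricCoefficient a b c n * n * t ^ (n - 1)) t := by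
  obtain ⟨s, hts, hs⟩ :=
    exists_summable_pow_mul_abs_ordinaryHypergeometricCoefficient_mul_pow (a := a) (b := b) hc ht
  have hF : (₂F₁ a b c : ℝ → ℝ) =
      fun y => ∑' n, ordinaryHypergeometricCoefficient a b c n * y ^ (n - 0) := by
    funext y
    exact ordinaryHypergeometric_eq_tsum_mul_pow y
  have := hasDerivAt_tsum_mul_pow_sub 0 hts (by simpa only [pow_one] using hs 1)
  rw [hF]
  simpa only [Nat.sub_zero, zero_add] using this

theorem hasDerivAt_deriv_ordinaryHypergeometric (hc : ∀ k : ℕ, c ≠ -k) {t : ℝ}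
    (ht : |t| < 1) :
    HasDerivAt (deriv (₂F₁ a b c)) (∑' n,
      ordinaryHypergeometricCoefficient a b c n * n * ((n - 1 : ℕ) : ℝ) * t ^ (n - 2)) t := by
  obtain ⟨s, hts, hs⟩ :=
    exists_summable_pow_mul_abs_ordinaryHypergeometricCoefficient_mul_pow (a := a) (b := b) hc ht
  have hderiv : deriv (₂F₁ a b c) =ᶠ[𝓝 t]
      fun y => ∑' n, ordinaryHypergeometricCoefficient a b c n * n * y ^ (n - 1) := by
    filter_upwards [(isOpen_lt continuous_abs continuous_const).mem_nhds ht] with y hy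
    exact (hasDerivAt_ordinaryHypergeometric hc hy).deriv
  refine HasDerivAt.congr_of_eventuallyEq ?_ hderiv
  have := hasDerivAt_tsum_mul_pow_sub (a := fun n => ordinaryHypergeometricCoefficient a b c n * n)
    1 hts (by simpa [abs_mul, pow_two, mul_assoc, mul_comm, mul_left_comm] using hs 2)
  simpa using this

theorem ordinaryHypergeometric_ode (hc : ∀ k : ℕ, c ≠ -k) {t : ℝ} (ht : |t| < 1) :
    t * (1 - t) * deriv (deriv (₂F₁ a b c)) t + (c - (a + b + 1) * t) * deriv (₂F₁ a b c) t
      - a * b * ₂F₁ a b c t = 0 := by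
  obtain ⟨s, hts, hs⟩ :=
    exists_summable_pow_mul_abs_ordinaryHypergeometricCoefficient_mul_pow (a := a) (b := b) hc ht
  rw [(hasDerivAt_deriv_ordinaryHypergeometric hc ht).deriv,
    (hasDerivAt_ordinaryHypergeometric hc ht).deriv, ordinaryHypergeometric_eq_tsum_mul_pow]
  exact hypergeometric_ode_tsum_of_recurrence (ordinaryHypergeometricCoefficient_succ hc) hts hs

end Hypergeometric

theorem poch_eq_eval_ascPochhammer (a : ℝ) (n : ℕ) : poch a n = (ascPochhammer ℝ n).eval a := by
  induction n with
  | zero => simp [poch]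
  | succ n ih => rw [poch, Finset.prod_range_succ, ← poch, ih, ascPochhammer_succ_eval]

theorem rG_eq_ordinaryHypergeometric (lam nu x : ℝ) :
    rG lam nu x = ₂F₁ (-nu) (nu + 2 * lam) (lam + 1 / 2) ((1 - x) / 2) := by
  rw [rG, ordinaryHypergeometric_eq_tsum_mul_pow]
  congr! 2 with n
  simp only [poch_eq_eval_ascPochhammer]
  ring

theorem deriv_comp_one_sub_div_two (f : ℝ → ℝ) (x : ℝ) :
    deriv (fun y => f ((1 - y) / 2)) x = -(deriv f ((1 - x) / 2) / 2) := by
  have h := deriv_comp_const_sub (f := fun z => f (2⁻¹ * z)) (a := 1) (x := x)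
  rw [deriv_comp_mul_left, smul_eq_mul] at h
  simp only [div_eq_inv_mul] at h ⊢
  rw [h]

theorem ggf_sturm_liouville_general (lam nu : ℝ) (hlam : -(1 / 2) < lam) :
    (∀ x ∈ Set.Ioo (-1 : ℝ) 1,
        DifferentiableAt ℝ (rG lam nu) x ∧ DifferentiableAt ℝ (deriv (rG lam nu)) x) ∧
      ∀ x ∈ Set.Ioo (-1 : ℝ) 1,
        (1 - x ^ 2) * deriv (deriv (rG lam nu)) x -
            (2 * lam + 1) * x * deriv (rG lam nu) x +
            nu * (nu + 2 * lam) * rG lam nu x = 0 := by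
  set F : ℝ → ℝ := ₂F₁ (-nu) (nu + 2 * lam) (lam + 1 / 2)
  have hc : ∀ k : ℕ, lam + 1 / 2 ≠ -k := fun k h => by linarith [(k.cast_nonneg : (0 : ℝ) ≤ k)]
  have hu : rG lam nu = fun x => F ((1 - x) / 2) := funext (rG_eq_ordinaryHypergeometric lam nu)
  have hu' : deriv (rG lam nu) = fun x => -(deriv F ((1 - x) / 2) / 2) := by
    rw [hu]
    exact funext (deriv_comp_one_sub_div_two F)
  have hu'' : deriv (deriv (rG lam nu)) = fun x => deriv (deriv F) ((1 - x) / 2) / 4 := by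
    funext x
    rw [hu', deriv.fun_neg, deriv_div_const, deriv_comp_one_sub_div_two]
    ring
  have hφ (x : ℝ) : DifferentiableAt ℝ (fun y : ℝ => (1 - y) / 2) x := by fun_prop
  have ht : ∀ x ∈ Set.Ioo (-1 : ℝ) 1, |(1 - x) / 2| < 1 := fun x ⟨h₁, h₂⟩ => by
    rw [abs_lt]; constructor <;> linarith
  refine ⟨fun x hx => ⟨?_, ?_⟩, fun x hx => ?_⟩
  · rw [hu]
    exact (hasDerivAt_ordinaryHypergeometric hc (ht x hx)).differentiableAt.comp x (hφ x)
  · rw [hu']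
    exact ((hasDerivAt_deriv_ordinaryHypergeometric hc (ht x hx)).differentiableAt.comp x
      (hφ x)).div_const 2 |>.neg
  · rw [hu'', hu', hu]
    linear_combination ordinaryHypergeometric_ode hc (ht x hx)

/-- The GGF-F is twice differentiable on `(−1,1)` and satisfies the
Sturm–Liouville equation
`(1−x²) u'' − (2λ+1) x u' + ν(ν+2λ) u = 0`. -/
theorem ggf_sturm_liouville (lam nu : ℝ) (hlam : -(1 / 2) < lam) (hnu : 0 ≤ nu) :
    (∀ x ∈ Set.Ioo (-1 : ℝ) 1,
        DifferentiableAt ℝ (rG lam nu) x ∧ DifferentiableAt ℝ (deriv (rG lam nu)) x) ∧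
      ∀ x ∈ Set.Ioo (-1 : ℝ) 1,
        (1 - x ^ 2) * deriv (deriv (rG lam nu)) x -
            (2 * lam + 1) * x * deriv (rG lam nu) x +
            nu * (nu + 2 * lam) * rG lam nu x = 0 :=
  ggf_sturm_liouville_general lam nu hlam
end
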